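/- Let (ūₙ) be convex functions on the open unit disc 𝔻 converging pointwise to a convex function ū, and let c̄: I → 𝔻 be a Lipschitz curve. Then for almost every t ∈ I at which all the derivatives (ūₙ∘c̄)′(t) and (ū∘c̄)′(t) exist, one has (along a subsequence independent of t) (ūₙ∘c̄)′(t) → (ū∘c̄)′(t). -/
import Mathlib

open Metric MeasureTheory Filter Asymptotics

lemma aux_deriv_le_slope {f : ℝ → ℝ} {a b x y d : ℝ}
    (hf : ConvexOn ℝ (Set.Ioo a b) f) (hx : x ∈ Set.Ioo a b) (hy : y ∈ Set.Ioo a b)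
    (hxy : x < y) (hd : HasDerivAt f d x) : d ≤ (f y - f x) / (y - x) := by
  have hs : Tendsto (slope f x) (nhdsWithin x (Set.Ioi x)) (nhds d) :=
    (hasDerivAt_iff_tendsto_slope.mp hd).mono_left
      (nhdsWithin_mono x fun z hz => Set.mem_compl_singleton_iff.mpr (ne_of_gt hz))
  refine le_of_tendsto hs ?_
  filter_upwards [Ioo_mem_nhdsGT_of_mem ⟨le_refl x, hxy⟩] with z hz
  have hz' : z ∈ Set.Ioo a b := ⟨lt_trans hx.1 hz.1, lt_trans hz.2 hy.2⟩
  rw [slope_def_field]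
  exact hf.secant_mono hx hz' hy (ne_of_gt hz.1) (ne_of_gt hxy) hz.2.le

lemma aux_slope_le_deriv {f : ℝ → ℝ} {a b x y d : ℝ}
    (hf : ConvexOn ℝ (Set.Ioo a b) f) (hx : x ∈ Set.Ioo a b) (hy : y ∈ Set.Ioo a b)
    (hyx : y < x) (hd : HasDerivAt f d x) : (f y - f x) / (y - x) ≤ d := by
  have hs : Tendsto (slope f x) (nhdsWithin x (Set.Iio x)) (nhds d) :=
    (hasDerivAt_iff_tendsto_slope.mp hd).mono_left
      (nhdsWithin_mono x fun z hz => Set.mem_compl_singleton_iff.mpr (ne_of_lt hz))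
  refine ge_of_tendsto hs ?_
  filter_upwards [Ioo_mem_nhdsLT_of_mem ⟨hyx, le_refl x⟩] with z hz
  have hz' : z ∈ Set.Ioo a b := ⟨lt_trans hy.1 hz.1, lt_trans hz.2 hx.2⟩
  rw [slope_def_field]
  exact hf.secant_mono hx hy hz' (ne_of_lt hyx) (ne_of_lt hz.2) hz.1.le

lemma aux_tendsto_deriv {a b x : ℝ} {f : ℕ → ℝ → ℝ} {g : ℝ → ℝ} {d : ℕ → ℝ} {e : ℝ}
    (hx : x ∈ Set.Ioo a b)
    (hf : ∀ n, ConvexOn ℝ (Set.Ioo a b) (f n))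
    (hptw : ∀ y ∈ Set.Ioo a b, Tendsto (fun n => f n y) atTop (nhds (g y)))
    (hd : ∀ n, HasDerivAt (f n) (d n) x) (he : HasDerivAt g e x) :
    Tendsto d atTop (nhds e) := by
  rw [tendsto_order]
  constructor
  · intro l hl
    have hsg : Tendsto (slope g x) (nhdsWithin x (Set.Iio x)) (nhds e) :=
      (hasDerivAt_iff_tendsto_slope.mp he).mono_left
        (nhdsWithin_mono x fun z hz => Set.mem_compl_singleton_iff.mpr (ne_of_lt hz))
    have h1 : ∀ᶠ z in nhdsWithin x (Set.Iio x), l < slope g x z :=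
      hsg.eventually (eventually_gt_nhds hl)
    obtain ⟨q, hq1, hq2⟩ := (h1.and (Ioo_mem_nhdsLT_of_mem ⟨hx.1, le_refl x⟩)).exists
    have hqab : q ∈ Set.Ioo a b := ⟨hq2.1, lt_trans hq2.2 hx.2⟩
    have hts : Tendsto (fun n => slope (f n) x q) atTop (nhds (slope g x q)) := by
      simp only [slope_def_field]
      exact ((hptw q hqab).sub (hptw x hx)).div_const _
    have h3 : ∀ᶠ n in atTop, l < slope (f n) x q :=
      hts.eventually (eventually_gt_nhds hq1)
    filter_upwards [h3] with n hn
    have hle := aux_slope_le_deriv (hf n) hx hqab hq2.2 (hd n)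
    rw [slope_def_field] at hn
    linarith
  · intro l hl
    have hsg : Tendsto (slope g x) (nhdsWithin x (Set.Ioi x)) (nhds e) :=
      (hasDerivAt_iff_tendsto_slope.mp he).mono_left
        (nhdsWithin_mono x fun z hz => Set.mem_compl_singleton_iff.mpr (ne_of_gt hz))
    have h1 : ∀ᶠ z in nhdsWithin x (Set.Ioi x), slope g x z < l :=
      hsg.eventually (eventually_lt_nhds hl)
    obtain ⟨p, hp1, hp2⟩ := (h1.and (Ioo_mem_nhdsGT_of_mem ⟨le_refl x, hx.2⟩)).exists
    have hpab : p ∈ Set.Ioo a b := ⟨lt_trans hx.1 hp2.1, hp2.2⟩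
    have hts : Tendsto (fun n => slope (f n) x p) atTop (nhds (slope g x p)) := by
      simp only [slope_def_field]
      exact ((hptw p hpab).sub (hptw x hx)).div_const _
    have h3 : ∀ᶠ n in atTop, slope (f n) x p < l :=
      hts.eventually (eventually_lt_nhds hp1)
    filter_upwards [h3] with n hn
    have hle := aux_deriv_le_slope (hf n) hx hpab hp2.1 (hd n)
    rw [slope_def_field] at hn
    linarith

lemma aux_transfer {E : Type*} [NormedAddCommGroup E] [NormedSpace ℝ E]
    {f : E → ℝ} {c l : ℝ → E} {t D : ℝ} {K : NNReal} {s' : Set E}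
    (hK : LipschitzOnWith K f s') (hs' : s' ∈ nhds (c t))
    (hcont : ContinuousAt c t) (hlcont : ContinuousAt l t) (hlt : l t = c t)
    (hlo : (fun s => c s - l s) =o[nhds t] fun s => s - t)
    (hcd : HasDerivAt (fun s => f (c s)) D t) :
    HasDerivAt (fun s => f (l s)) D t := by
  rw [hasDerivAt_iff_isLittleO] at hcd ⊢
  have hbig : (fun s => f (l s) - f (c s)) =O[nhds t] (fun s => c s - l s) := by
    rw [Asymptotics.isBigO_iff]
    refine ⟨K, ?_⟩
    have h1 : ∀ᶠ s in nhds t, c s ∈ s' := hcont.eventually_mem hs'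
    have h2 : ∀ᶠ s in nhds t, l s ∈ s' := hlcont.eventually_mem (hlt ▸ hs')
    filter_upwards [h1, h2] with s h1 h2
    calc ‖f (l s) - f (c s)‖ = dist (f (l s)) (f (c s)) := (dist_eq_norm _ _).symm
      _ ≤ K * dist (l s) (c s) := hK.dist_le_mul _ h2 _ h1
      _ = K * ‖c s - l s‖ := by rw [dist_comm, dist_eq_norm]
  have h := (hbig.trans_isLittleO hlo).add hcd
  refine h.congr' ?_ (Filter.EventuallyEq.refl _ _)
  filter_upwards with s
  simp only [hlt, smul_eq_mul]
  ring

/-- If convex functions `uₙ` on the open unit disc converge pointwise to a convex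
function `u`, and `c̄` is a Lipschitz curve in the disc, then (along a subsequence
independent of `t`) for almost every `t` at which all the derivatives exist,
`(uₙ ∘ c̄)'(t) → (u ∘ c̄)'(t)`. -/
theorem convex_derivatives_converge
    (u : ℕ → EuclideanSpace ℝ (Fin 2) → ℝ) (v : EuclideanSpace ℝ (Fin 2) → ℝ)
    (hconv : ∀ n, ConvexOn ℝ (ball (0 : EuclideanSpace ℝ (Fin 2)) 1) (u n))
    (hconvv : ConvexOn ℝ (ball (0 : EuclideanSpace ℝ (Fin 2)) 1) v)
    (hptwise : ∀ x ∈ ball (0 : EuclideanSpace ℝ (Fin 2)) 1,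
      Filter.Tendsto (fun n => u n x) Filter.atTop (nhds (v x)))
    (c : ℝ → EuclideanSpace ℝ (Fin 2)) (Kc : NNReal) (hc : LipschitzWith Kc c)
    (hcin : ∀ t ∈ Set.Icc (0:ℝ) 1, c t ∈ ball (0 : EuclideanSpace ℝ (Fin 2)) 1) :
    ∃ φ : ℕ → ℕ, StrictMono φ ∧
      ∀ᵐ t ∂(volume.restrict (Set.Icc (0:ℝ) 1)),
        (∀ n, DifferentiableAt ℝ (fun s => u (φ n) (c s)) t) →
        DifferentiableAt ℝ (fun s => v (c s)) t →
        Filter.Tendsto (fun n => deriv (fun s => u (φ n) (c s)) t) Filter.atTop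
          (nhds (deriv (fun s => v (c s)) t)) := by
  refine ⟨id, strictMono_id, ?_⟩
  have hrad : ∀ᵐ t ∂(volume.restrict (Set.Icc (0:ℝ) 1)), DifferentiableAt ℝ c t :=
    ae_restrict_of_ae (hc.ae_differentiableAt (μ := volume))
  filter_upwards [hrad, ae_restrict_mem measurableSet_Icc] with t hct htI Hn Hv
  have hx₀ : c t ∈ ball (0 : EuclideanSpace ℝ (Fin 2)) 1 := hcin t htI
  obtain ⟨r, hr, hrsub⟩ := Metric.isOpen_iff.mp Metric.isOpen_ball _ hx₀
  set d0 : EuclideanSpace ℝ (Fin 2) := deriv c t with hd0def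
  have hd0 : HasDerivAt c d0 t := hct.hasDerivAt
  set l : ℝ → EuclideanSpace ℝ (Fin 2) := fun s => c t + (s - t) • d0 with hldef
  have hlt : l t = c t := by simp [hldef]
  set δ : ℝ := r / (‖d0‖ + 1) with hδdef
  have hδ : 0 < δ := div_pos hr (by positivity)
  have hlmem : ∀ s ∈ Set.Ioo (t - δ) (t + δ), l s ∈ ball (0 : EuclideanSpace ℝ (Fin 2)) 1 := by
    intro s hs
    apply hrsub
    have hst : |s - t| < δ := abs_sub_lt_iff.mpr ⟨by linarith [hs.2], by linarith [hs.1]⟩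
    have : ‖l s - c t‖ = |s - t| * ‖d0‖ := by
      simp [hldef, norm_smul]
    rw [mem_ball, dist_eq_norm, this]
    calc |s - t| * ‖d0‖ ≤ |s - t| * (‖d0‖ + 1) := by
          apply mul_le_mul_of_nonneg_left (by linarith) (abs_nonneg _)
      _ < δ * (‖d0‖ + 1) := by
          apply mul_lt_mul_of_pos_right hst (by positivity)
      _ = r := by
          rw [hδdef]; field_simp
  -- l as an affine map
  set A : ℝ →ᵃ[ℝ] EuclideanSpace ℝ (Fin 2) :=
    AffineMap.lineMap (c t - t • d0) (c t - t • d0 + d0) with hAdef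
  have hA : ∀ s, A s = l s := by
    intro s
    simp [hAdef, AffineMap.lineMap_apply, hldef, sub_smul]
    abel
  have hconvl : ∀ w : EuclideanSpace ℝ (Fin 2) → ℝ,
      ConvexOn ℝ (ball (0 : EuclideanSpace ℝ (Fin 2)) 1) w →
      ConvexOn ℝ (Set.Ioo (t - δ) (t + δ)) (fun s => w (l s)) := by
    intro w hw
    have h1 := hw.comp_affineMap A
    have h2 : ConvexOn ℝ (Set.Ioo (t - δ) (t + δ)) (w ∘ A) :=
      h1.subset (fun s hs => by
        simp only [Set.mem_preimage, hA]; exact hlmem s hs) (convex_Ioo _ _)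
    convert h2 using 1
    funext s
    simp [Function.comp, hA]
  have hlo : (fun s => c s - l s) =o[nhds t] fun s => s - t := by
    have := hasDerivAt_iff_isLittleO.mp hd0
    refine this.congr' ?_ (Filter.EventuallyEq.refl _ _)
    filter_upwards with s
    simp [hldef]
    abel
  have hlcont : ContinuousAt l t :=
    ((continuous_const.add ((continuous_id.sub continuous_const).smul
      continuous_const)) : Continuous l).continuousAt
  have hlip : ∀ w : EuclideanSpace ℝ (Fin 2) → ℝ,
      ConvexOn ℝ (ball (0 : EuclideanSpace ℝ (Fin 2)) 1) w →
      ∃ K : NNReal, ∃ s' ∈ nhds (c t), LipschitzOnWith K w s' := by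
    intro w hw
    obtain ⟨K, s', hs', hK⟩ := (hw.locallyLipschitzOn Metric.isOpen_ball) hx₀
    exact ⟨K, s', by rwa [nhdsWithin_eq_nhds.mpr (Metric.isOpen_ball.mem_nhds hx₀)] at hs', hK⟩
  have hder : ∀ (w : EuclideanSpace ℝ (Fin 2) → ℝ),
      ConvexOn ℝ (ball (0 : EuclideanSpace ℝ (Fin 2)) 1) w →
      DifferentiableAt ℝ (fun s => w (c s)) t →
      HasDerivAt (fun s => w (l s)) (deriv (fun s => w (c s)) t) t := by
    intro w hw hdiff
    obtain ⟨K, s', hs', hK⟩ := hlip w hw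
    exact aux_transfer hK hs' hc.continuous.continuousAt hlcont hlt hlo hdiff.hasDerivAt
  have hxmem : t ∈ Set.Ioo (t - δ) (t + δ) := ⟨by linarith, by linarith⟩
  exact aux_tendsto_deriv hxmem
    (fun n => hconvl (u n) (hconv n))
    (fun y hy => hptwise (l y) (hlmem y hy))
    (fun n => hder (u n) (hconv n) (Hn n))
    (hder v hconvv Hv)
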